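/- Let $R \in \mathrm{Igr}_+$. Then the colimit ring $\mathbb{A}(R) = \varinjlim_n R_n$ (with transition maps $h_n = \top_1 *_{1n} (-)$ and multiplication induced by the $*_{nm}$) is a boolean ring, i.e., every element satisfies $x^2 = x$. -/

import Mathlib

namespace IgrPaper

/-- Data of an inductive graded ring: a family of carriers, additions, pointed
elements `⊤ₙ` and zero, and graded multiplications. -/
structure IgrData : Type 1 where
  C : ℕ → Type
  add : ∀ {n}, C n → C n → C n
  zero : ∀ n, C n
  top : ∀ n, C n
  mul : ∀ {n m}, C n → C m → C (n + m)

namespace IgrData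

/-- The transition map `hₙ = ⊤₁ *₁ₙ (-) : Rₙ → Rₙ₊₁`. -/
def h (R : IgrData) {n : ℕ} (x : R.C n) : R.C (n + 1) :=
  cast (congrArg R.C (Nat.add_comm 1 n)) (R.mul (R.top 1) x)

/-- The axioms of an inductive graded ring. -/
structure IsIgr (R : IgrData) : Prop where
  add_assoc : ∀ {n} (x y z : R.C n), R.add (R.add x y) z = R.add x (R.add y z)
  add_comm : ∀ {n} (x y : R.C n), R.add x y = R.add y x
  add_zero : ∀ {n} (x : R.C n), R.add x (R.zero n) = x
  add_self : ∀ {n} (x : R.C n), R.add x x = R.zero n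
  zero_ne_top : R.zero 0 ≠ R.top 0
  level0 : ∀ x : R.C 0, x = R.zero 0 ∨ x = R.top 0
  mul_add : ∀ {n m} (x : R.C n) (y z : R.C m),
    R.mul x (R.add y z) = R.add (R.mul x y) (R.mul x z)
  add_mul : ∀ {n m} (x y : R.C n) (z : R.C m),
    R.mul (R.add x y) z = R.add (R.mul x z) (R.mul y z)
  mul_assoc : ∀ {n m p} (x : R.C n) (y : R.C m) (z : R.C p),
    HEq (R.mul (R.mul x y) z) (R.mul x (R.mul y z))
  mul_comm : ∀ {n m} (x : R.C n) (y : R.C m), HEq (R.mul x y) (R.mul y x)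
  mul_top0 : ∀ {n} (x : R.C n), R.mul x (R.top 0) = x
  top_mul_top : ∀ n m, R.mul (R.top n) (R.top m) = R.top (n + m)
  h_top : ∀ n, R.h (R.top n) = R.top (n + 1)
  h_compat : ∀ {n m} (x : R.C n) (y : R.C m),
    HEq (R.mul (R.h x) (R.h y)) (R.h (R.h (R.mul x y)))

/-- Morphism of inductive graded rings: a levelwise family of pointed group
homomorphisms whose direct sum is a unital ring homomorphism. -/
structure IsIgrHom (R S : IgrData) (f : ∀ n, R.C n → S.C n) : Prop where
  map_add : ∀ (n : ℕ) (x y : R.C n), f n (R.add x y) = S.add (f n x) (f n y)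
  map_zero : ∀ n, f n (R.zero n) = S.zero n
  map_top : ∀ n, f n (R.top n) = S.top n
  map_mul : ∀ (n m : ℕ) (x : R.C n) (y : R.C m),
    f (n + m) (R.mul x y) = S.mul (f n x) (f m y)

/-- Iterated transition map `Rₙ → Rₙ₊ₖ`. -/
def hIter (R : IgrData) : ∀ (k : ℕ) {n : ℕ}, R.C n → R.C (n + k)
  | 0, _, x => x
  | k+1, _, x => R.h (R.hIter k x)

/-- Pure products of `n` elements of level 1. -/
inductive Pure1 (R : IgrData) : ∀ n, R.C n → Prop
  | base (a : R.C 1) : Pure1 R 1 a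
  | step {n : ℕ} (x : R.C n) (a : R.C 1) : Pure1 R n x → Pure1 R (n + 1) (R.mul x a)

/-- Elements additively generated by pure products of level-1 elements. -/
inductive Gen1 (R : IgrData) : ∀ n, R.C n → Prop
  | pure {n : ℕ} (x : R.C n) : Pure1 R n x → Gen1 R n x
  | zero (n : ℕ) : Gen1 R n (R.zero n)
  | add {n : ℕ} (x y : R.C n) : Gen1 R n x → Gen1 R n y → Gen1 R n (R.add x y)

/-- `R` is generated at level 1 (the condition defining `Igr₁`). -/
def GeneratedAt1 (R : IgrData) : Prop := ∀ n, 1 ≤ n → ∀ x : R.C n, Gen1 R n x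

/-- The "hyperbolic" condition defining `Igr_h`: `a *₁₁ a = ⊤₁ *₁₁ a`. -/
def HCond (R : IgrData) : Prop := ∀ a : R.C 1, R.mul a a = R.mul (R.top 1) a

/-- Membership in `Igr₊ = Igr₁ ∩ Igr_h`. -/
def IgrPlus (R : IgrData) : Prop := GeneratedAt1 R ∧ HCond R

/-- Marshall-type condition: all transition maps are injective. -/
def MC (R : IgrData) : Prop := ∀ n, Function.Injective fun x : R.C n => R.h x

end IgrData
end IgrPaper
namespace IgrPaper
namespace IgrData

/-- One-step relation generating the colimit of the system `(Rₙ, hₙ)`. -/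
def colimRel (R : IgrData) : (Σ n, R.C n) → (Σ n, R.C n) → Prop :=
  fun p q => q = ⟨p.1 + 1, R.h p.2⟩

/-- The colimit `𝔸(R) = colimₙ Rₙ`. -/
def Colim (R : IgrData) : Type := Quot (colimRel R)

/-- The canonical cocone map `Rₙ → 𝔸(R)`. -/
def cmk (R : IgrData) {n : ℕ} (x : R.C n) : Colim R := Quot.mk _ ⟨n, x⟩

/-- Multiplication on the colimit ring `𝔸(R)`. -/
noncomputable def cmul (R : IgrData) (a b : Colim R) : Colim R :=
  Quot.mk _ ⟨a.out.1 + b.out.1, R.mul a.out.2 b.out.2⟩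

/-- Addition on the colimit ring `𝔸(R)`. -/
noncomputable def cadd (R : IgrData) (a b : Colim R) : Colim R :=
  Quot.mk _ ⟨a.out.1 + b.out.1,
    R.add (R.hIter b.out.1 a.out.2)
      (cast (congrArg R.C (Nat.add_comm b.out.1 a.out.1)) (R.hIter a.out.1 b.out.2))⟩

/-- The levels of the trivial inductive graded ring `𝕋(B)`. -/
abbrev TC (B : Type) : ℕ → Type
  | 0 => ZMod 2
  | _+1 => B

/-- The trivial inductive graded ring `𝕋(B)` on a commutative ring `B`:
`𝔽₂` at level 0 and `B` at all higher levels, with identity transitions. -/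
def TData (B : Type) [CommRing B] : IgrData where
  C := TC B
  add := fun {n} => match n with
    | 0 => fun x y => ((x : ZMod 2) + (y : ZMod 2) : ZMod 2)
    | _+1 => fun x y => ((x : B) + (y : B) : B)
  zero := fun n => match n with
    | 0 => ((0 : ZMod 2) : TC B 0)
    | k+1 => ((0 : B) : TC B (k+1))
  top := fun n => match n with
    | 0 => ((1 : ZMod 2) : TC B 0)
    | k+1 => ((1 : B) : TC B (k+1))
  mul := fun {n m} => match n, m with
    | 0, 0 => fun x y => ((x : ZMod 2) * (y : ZMod 2) : ZMod 2)
    | 0, _+1 => fun x b => (if (x : ZMod 2) = 1 then (b : B) else (0 : B) : B)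
    | _+1, 0 => fun b x => (if (x : ZMod 2) = 1 then (b : B) else (0 : B) : B)
    | _+1, _+1 => fun a b => ((a : B) * (b : B) : B)

/-- The levels of `𝕋(𝔸(R))`. -/
abbrev TCc (R : IgrData) : ℕ → Type
  | 0 => ZMod 2
  | _+1 => Colim R

/-- The inductive graded ring `𝕋(𝔸(R))`. -/
noncomputable def TColim (R : IgrData) : IgrData where
  C := TCc R
  add := fun {n} => match n with
    | 0 => fun x y => ((x : ZMod 2) + (y : ZMod 2) : ZMod 2)
    | _+1 => fun x y => (R.cadd x y : Colim R)
  zero := fun n => match n with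
    | 0 => ((0 : ZMod 2) : TCc R 0)
    | k+1 => (R.cmk (R.zero 0) : TCc R (k+1))
  top := fun n => match n with
    | 0 => ((1 : ZMod 2) : TCc R 0)
    | k+1 => (R.cmk (R.top 0) : TCc R (k+1))
  mul := fun {n m} => match n, m with
    | 0, 0 => fun x y => ((x : ZMod 2) * (y : ZMod 2) : ZMod 2)
    | 0, _+1 => fun x q => (if (x : ZMod 2) = 1 then (q : Colim R) else R.cmk (R.zero 0) : Colim R)
    | _+1, 0 => fun q x => (if (x : ZMod 2) = 1 then (q : Colim R) else R.cmk (R.zero 0) : Colim R)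
    | _+1, _+1 => fun p q => (R.cmul p q : Colim R)

open Classical in
/-- The canonical (unit) morphism `η_R : R → 𝕋(𝔸(R))`. -/
noncomputable def eta (R : IgrData) : ∀ n, R.C n → (TColim R).C n
  | 0 => fun x => (if x = R.top 0 then (1 : ZMod 2) else (0 : ZMod 2) : ZMod 2)
  | _+1 => fun x => (R.cmk x : Colim R)

/-- The functor `𝕋` on morphisms. -/
def Tmap {A B : Type} [CommRing A] [CommRing B] (g : A →+* B) :
    ∀ n, (TData A).C n → (TData B).C n
  | 0 => fun x => (x : ZMod 2)
  | _+1 => fun a => (g (a : A) : B)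

/-- `𝕋` applied to a plain function `𝔸(R) → A`. -/
def TmapF {A : Type} [CommRing A] (R : IgrData) (g : Colim R → A) :
    ∀ n, (TColim R).C n → (TData A).C n
  | 0 => fun x => (x : ZMod 2)
  | _+1 => fun q => (g (q : Colim R) : A)

/-- The induced map on colimits `𝔸(f) : 𝔸(R) → 𝔸(S)`. -/
noncomputable def cmap {R S : IgrData} (f : ∀ n, R.C n → S.C n) (q : Colim R) : Colim S :=
  Quot.mk _ ⟨q.out.1, f q.out.1 q.out.2⟩

end IgrData
end IgrPaper

/-! Squaring a class of `𝔸(R)` multiplies a representative `x ∈ Rₙ` by itself. The key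
lemma `x *ₙₙ x = ⊤ₙ *ₙₙ x` holds on level one by hypothesis, is stable under products and
(in characteristic two, where the cross terms cancel) under sums, hence holds everywhere since
`R` is generated at level 1. Finally `⊤ₙ *ₙₙ x` is the `n`-fold transition image of `x`, so it
has the same class as `x`. -/

namespace IgrPaper
namespace IgrData

variable {R : IgrData}

/-- On `Σ n, Rₙ` associativity and commutativity of the graded product become equalities
rather than `HEq`s. -/
def tmul (p q : Σ n, R.C n) : Σ n, R.C n := ⟨p.1 + q.1, R.mul p.2 q.2⟩

def SqEqTopMul {n : ℕ} (x : R.C n) : Prop := R.mul x x = R.mul (R.top n) x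

namespace IsIgr

variable (hR : R.IsIgr)
include hR

lemma tmul_assoc (p q r : Σ n, R.C n) : tmul (tmul p q) r = tmul p (tmul q r) :=
  Sigma.ext (Nat.add_assoc _ _ _) (hR.mul_assoc _ _ _)

lemma tmul_comm (p q : Σ n, R.C n) : tmul p q = tmul q p :=
  Sigma.ext (Nat.add_comm _ _) (hR.mul_comm _ _)

lemma tmul_tmul_tmul_comm (p q r s : Σ n, R.C n) :
    tmul (tmul p q) (tmul r s) = tmul (tmul p r) (tmul q s) := by
  rw [hR.tmul_assoc, ← hR.tmul_assoc q, hR.tmul_comm q r, hR.tmul_assoc r, ← hR.tmul_assoc]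

lemma add_self_eq_zero_of_eq {n : ℕ} {x y : R.C n} (h : x = R.add y y) : x = R.zero n :=
  h.trans (hR.add_self y)

lemma mul_zero {n m : ℕ} (x : R.C n) : R.mul x (R.zero m) = R.zero (n + m) :=
  hR.add_self_eq_zero_of_eq <| by rw [← hR.mul_add, hR.add_zero]

lemma sqEqTopMul_zero (n : ℕ) : SqEqTopMul (R.zero n) := by
  rw [SqEqTopMul, hR.mul_zero, hR.mul_zero]

lemma sqEqTopMul_add {n : ℕ} {x y : R.C n} (hx : SqEqTopMul x) (hy : SqEqTopMul y) :
    SqEqTopMul (R.add x y) := by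
  have cross : R.add (R.mul y x) (R.mul x y) = R.zero (n + n) := by
    rw [eq_of_heq (hR.mul_comm y x), hR.add_self]
  unfold SqEqTopMul at *
  rw [hR.mul_add, hR.add_mul, hR.add_mul, hR.mul_add, ← hx, ← hy, hR.add_assoc,
    ← hR.add_assoc (R.mul y x), cross, hR.add_comm (R.zero _), hR.add_zero]

lemma sqEqTopMul_mul {n m : ℕ} {x : R.C n} {y : R.C m} (hx : SqEqTopMul x)
    (hy : SqEqTopMul y) : SqEqTopMul (R.mul x y) := by
  unfold SqEqTopMul at *
  have h : tmul (tmul ⟨n, x⟩ ⟨m, y⟩) (tmul ⟨n, x⟩ ⟨m, y⟩)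
      = tmul (tmul ⟨n, R.top n⟩ ⟨m, R.top m⟩) (tmul ⟨n, x⟩ ⟨m, y⟩) :=
    calc _ = tmul (tmul ⟨n, x⟩ ⟨n, x⟩) (tmul ⟨m, y⟩ ⟨m, y⟩) :=
          hR.tmul_tmul_tmul_comm _ _ _ _
      _ = tmul (tmul ⟨n, R.top n⟩ ⟨n, x⟩) (tmul ⟨m, R.top m⟩ ⟨m, y⟩) := by
          simp only [tmul, ← hx, ← hy]
      _ = _ := hR.tmul_tmul_tmul_comm _ _ _ _
  simp only [tmul, hR.top_mul_top] at h
  exact sigma_mk_injective h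

lemma sqEqTopMul_of_pure1 (hh : HCond R) {n : ℕ} {x : R.C n} (hx : Pure1 R n x) :
    SqEqTopMul x := by
  induction hx with
  | base a => exact hh a
  | step x a _ ih => exact hR.sqEqTopMul_mul ih (hh a)

lemma sqEqTopMul_of_gen1 (hh : HCond R) {n : ℕ} {x : R.C n} (hx : Gen1 R n x) :
    SqEqTopMul x := by
  induction hx with
  | pure x hx => exact hR.sqEqTopMul_of_pure1 hh hx
  | zero => exact hR.sqEqTopMul_zero _
  | add x y _ _ ihx ihy => exact hR.sqEqTopMul_add ihx ihy

lemma sqEqTopMul (hgen : GeneratedAt1 R) (hh : HCond R) {n : ℕ} (x : R.C n) :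
    SqEqTopMul x := by
  rcases n with _ | n
  · rcases hR.level0 x with rfl | rfl
    · exact hR.sqEqTopMul_zero 0
    · rfl
  · exact hR.sqEqTopMul_of_gen1 hh (hgen _ n.succ_pos x)

lemma sigma_hIter (k : ℕ) {n : ℕ} (x : R.C n) :
    (⟨n + k, R.hIter k x⟩ : Σ n, R.C n) = ⟨k + n, R.mul (R.top k) x⟩ := by
  induction k with
  | zero =>
    change (⟨n, x⟩ : Σ n, R.C n) = tmul ⟨0, R.top 0⟩ ⟨n, x⟩
    rw [hR.tmul_comm, tmul, hR.mul_top0]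
    rfl
  | succ k ih =>
    calc (⟨n + (k + 1), R.hIter (k + 1) x⟩ : Σ n, R.C n)
        = tmul ⟨1, R.top 1⟩ ⟨n + k, R.hIter k x⟩ :=
          Sigma.ext (Nat.add_comm (n + k) 1) (cast_heq _ _)
      _ = tmul (tmul ⟨1, R.top 1⟩ ⟨k, R.top k⟩) ⟨n, x⟩ := by rw [ih, hR.tmul_assoc]; rfl
      _ = _ := by rw [hR.tmul_comm ⟨1, _⟩]; simp only [tmul, hR.top_mul_top]

end IsIgr

lemma cmk_hIter (k : ℕ) {n : ℕ} (x : R.C n) : R.cmk (R.hIter k x) = R.cmk x := by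
  induction k with
  | zero => rfl
  | succ k ih =>
    exact (Quot.sound rfl : R.cmk (R.hIter k x) = R.cmk (R.hIter (k + 1) x)).symm.trans ih

lemma IsIgr.cmk_top_mul (hR : R.IsIgr) {k n : ℕ} (x : R.C n) :
    R.cmk (R.mul (R.top k) x) = R.cmk x :=
  (congrArg (Quot.mk _) (hR.sigma_hIter k x).symm).trans (cmk_hIter k x)

end IgrData

open IgrData

/-- For `R ∈ Igr₊`, the colimit ring `𝔸(R) = colimₙ Rₙ` is boolean:
every element is idempotent. -/
theorem stmt13 (R : IgrData) (hR : R.IsIgr) (hgen : GeneratedAt1 R) (hh : HCond R) :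
    ∀ q : Colim R, R.cmul q q = q := by
  intro q
  change R.cmk (R.mul q.out.2 q.out.2) = q
  rw [hR.sqEqTopMul hgen hh, hR.cmk_top_mul]
  exact q.out_eq

end IgrPaper
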